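/- arXiv:1203.5362 — 2 statements merged into one kernel-verified Lean document; each statement's English description precedes it below -/
import Mathlib

section
/- Let N and L be integers with N > 3 and L ≥ 1, and let p = (p_1, …, p_L) be any probability vector (p_k ≥ 0, ∑_{k=1}^L p_k = 1). Then (N−1) · ∑_{k=1}^L p_k (∑_{l=k}^L p_l) > 1. Consequently, for any real β with 0 < β and βN < 1, the quantity ε = β·((N−1)·∑_{k=1}^L p_k (∑_{l=k}^L p_l) − 1) / (1 − βN) is strictly positive. -/
/-!
Expanding `(∑ p)²` over ordered pairs and grouping each pair under its smaller index gives
`2 ∑_k p_k ∑_{l ≥ k} p_l = (∑_k p_k)² + ∑_k p_k²`: every off-diagonal pair is counted once on each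
side, the diagonal twice on the left. For a probability vector the double sum is therefore at
least `1/2`, so multiplying by `N - 1 ≥ 3` pushes it past `1`.
-/

open Finset

section TriangularSum

variable {α R : Type*} [Fintype α] [LinearOrder α] [LocallyFiniteOrderTop α]
  [LocallyFiniteOrderBot α]

theorem sum_Ici_add_sum_Iic [AddCommMonoid R] (f : α → R) (k : α) :
    ∑ l ∈ Ici k, f l + ∑ l ∈ Iic k, f l = ∑ l, f l + f k := by
  have hunion : Ici k ∪ Iic k = univ := by
    ext x; simp [le_total]
  have hinter : Ici k ∩ Iic k = {k} := by
    ext x; simp [le_antisymm_iff, and_comm]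
  rw [← sum_union_inter, hunion, hinter, sum_singleton]

theorem sum_mul_sum_Iic_eq_sum_mul_sum_Ici [CommSemiring R] (f : α → R) :
    ∑ k, f k * ∑ l ∈ Iic k, f l = ∑ k, f k * ∑ l ∈ Ici k, f l := by
  simp only [mul_sum]
  rw [sum_comm' (t' := univ) (s' := fun l => Ici l) (fun k l => by simp)]
  simp only [mul_comm]

theorem two_mul_sum_mul_sum_Ici [CommSemiring R] (f : α → R) :
    2 * ∑ k, f k * ∑ l ∈ Ici k, f l = (∑ k, f k) ^ 2 + ∑ k, f k ^ 2 := by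
  calc 2 * ∑ k, f k * ∑ l ∈ Ici k, f l
      = ∑ k, f k * (∑ l ∈ Ici k, f l + ∑ l ∈ Iic k, f l) := by
        rw [two_mul]
        nth_rewrite 2 [← sum_mul_sum_Iic_eq_sum_mul_sum_Ici]
        simp only [mul_add, sum_add_distrib]
    _ = ∑ k, (f k * ∑ l, f l + f k ^ 2) := by
        simp only [sum_Ici_add_sum_Iic, mul_add, sq]
    _ = (∑ k, f k) ^ 2 + ∑ k, f k ^ 2 := by
        rw [sum_add_distrib, ← sum_mul, sq]

end TriangularSum

theorem stmt_7_general (N L : ℕ) (hN : 3 < N)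
    (p : Fin L → ℝ) (hsum : ∑ k, p k = 1) :
    (1 < ((N : ℝ) - 1) * ∑ k, p k * ∑ l ∈ Finset.Ici k, p l) ∧
    (∀ β : ℝ, 0 < β → β * (N : ℝ) < 1 →
      0 < β * (((N : ℝ) - 1) * (∑ k, p k * ∑ l ∈ Finset.Ici k, p l) - 1)
            / (1 - β * (N : ℝ))) := by
  have hhalf : 1 / 2 ≤ ∑ k, p k * ∑ l ∈ Ici k, p l := by
    have hid := two_mul_sum_mul_sum_Ici p
    rw [hsum, one_pow] at hid
    linarith [sum_nonneg (s := univ) fun k _ => sq_nonneg (p k)]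
  have hN4 : (4 : ℝ) ≤ N := by exact_mod_cast hN
  have hpos : 1 < ((N : ℝ) - 1) * ∑ k, p k * ∑ l ∈ Ici k, p l := by nlinarith
  exact ⟨hpos, fun β hβ hβN => div_pos (mul_pos hβ (by linarith)) (by linarith)⟩

/-- For `N > 3`, `L ≥ 1`, and any probability vector `p` on `L` states,
`(N−1)·∑_{k=1}^L p_k (∑_{l=k}^L p_l) > 1`; consequently for any `β` with `0 < β` and
`βN < 1`, `ε = β·((N−1)·∑_k p_k (∑_{l≥k} p_l) − 1)/(1 − βN) > 0`. -/
theorem stmt_7 (N L : ℕ) (hN : 3 < N) (hL : 1 ≤ L)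
    (p : Fin L → ℝ) (hp : ∀ k, 0 ≤ p k) (hsum : ∑ k, p k = 1) :
    (1 < ((N : ℝ) - 1) * ∑ k, p k * ∑ l ∈ Finset.Ici k, p l) ∧
    (∀ β : ℝ, 0 < β → β * (N : ℝ) < 1 →
      0 < β * (((N : ℝ) - 1) * (∑ k, p k * ∑ l ∈ Finset.Ici k, p l) - 1)
            / (1 - β * (N : ℝ))) :=
  stmt_7_general N L hN p hsum
end

section
/- Let N ≥ 1 and L ≥ 1 be integers and let p_min, q_min be positive reals. Let (p_{n,k})_{1≤n≤N, 1≤k≤L} satisfy p_{n,k} ≥ p_min and ∑_{k=1}^L p_{n,k} = 1 for every n, and let (q_n)_{1≤n≤N} satisfy q_n ≥ q_min for every n. Then ∑_{n=1}^N q_n · ∑_{k=1}^L p_{n,k} · (∑_{m ≠ n} ∑_{l=k}^L p_{m,l}) ≥ N·q_min·(N−1)·( p_min + p_min²·L(L−1)/2 ). -/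
/-!
For two users `n ≠ m`, `∑_k p_{n,k} ∑_{l ≥ k} p_{m,l}` is at least the diagonal mass
`∑_k p_{n,k} p_{m,k} ≥ p_min` plus `p_min²` for each of the `L(L-1)/2` pairs `k < l`.
Summing over the `N - 1` users `m ≠ n` and then, with weights `q_n ≥ q_min`, over the `N` users `n`
gives the bound.
-/

open Finset

theorem Fin.sum_card_Ioi (L : ℕ) : ∑ k : Fin L, (#(Ioi k) : ℝ) = L * (L - 1) / 2 := by
  simp only [Fin.card_Ioi]
  rw [Fin.sum_univ_eq_sum_range (fun k => ((L - 1 - k : ℕ) : ℝ)),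
    sum_range_reflect (fun k => (k : ℝ))]
  induction L with
  | zero => simp
  | succ L ih => rw [sum_range_succ, ih]; push_cast; ring

theorem le_sum_mul_sum_Ici {L : ℕ} {c : ℝ} (hc : 0 ≤ c) {a b : Fin L → ℝ}
    (ha : ∀ k, c ≤ a k) (hb : ∀ k, c ≤ b k) (hb_sum : ∑ k, b k = 1) :
    c + c ^ 2 * (L * (L - 1) / 2) ≤ ∑ k, a k * ∑ l ∈ Ici k, b l := by
  have hterm (k : Fin L) : c * b k + c ^ 2 * #(Ioi k) ≤ a k * ∑ l ∈ Ici k, b l := by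
    have hIoi : c * #(Ioi k) ≤ ∑ l ∈ Ioi k, b l := by
      simpa [mul_comm] using card_nsmul_le_sum (Ioi k) b c fun l _ => hb l
    have hsplit : ∑ l ∈ Ici k, b l = b k + ∑ l ∈ Ioi k, b l := by
      rw [← Ioi_insert, sum_insert notMem_Ioi_self]
    calc c * b k + c ^ 2 * #(Ioi k) = c * (b k + c * #(Ioi k)) := by ring
      _ ≤ c * ∑ l ∈ Ici k, b l := by rw [hsplit]; gcongr
      _ ≤ a k * ∑ l ∈ Ici k, b l :=
        mul_le_mul_of_nonneg_right (ha k) (sum_nonneg fun l _ => hc.trans (hb l))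
  calc c + c ^ 2 * (L * (L - 1) / 2) = ∑ k, (c * b k + c ^ 2 * #(Ioi k)) := by
        rw [sum_add_distrib, ← mul_sum, hb_sum, ← mul_sum, Fin.sum_card_Ioi, mul_one]
    _ ≤ ∑ k, a k * ∑ l ∈ Ici k, b l := sum_le_sum fun k _ => hterm k

theorem le_sum_mul_sum_erase_sum_Ici {ι : Type*} [Fintype ι] [DecidableEq ι] {L : ℕ} {c : ℝ}
    (hc : 0 ≤ c) {p : ι → Fin L → ℝ} (hp : ∀ n k, c ≤ p n k) (hp_sum : ∀ n, ∑ k, p n k = 1)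
    (n : ι) :
    ((Fintype.card ι : ℝ) - 1) * (c + c ^ 2 * (L * (L - 1) / 2))
      ≤ ∑ k, p n k * ∑ m ∈ univ.erase n, ∑ l ∈ Ici k, p m l := by
  have hcard : ((#(univ.erase n) : ℕ) : ℝ) = Fintype.card ι - 1 := by
    rw [card_erase_of_mem (mem_univ n), card_univ, Nat.cast_pred (Fintype.card_pos_iff.mpr ⟨n⟩)]
  simp only [mul_sum (univ.erase n)]
  rw [sum_comm, ← hcard, ← nsmul_eq_mul]
  exact card_nsmul_le_sum _ _ _ fun m _ =>
    le_sum_mul_sum_Ici hc (hp n) (hp m) (hp_sum m)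

theorem stmt_10_general (N L : ℕ)
    (pmin qmin : ℝ) (hpmin : 0 < pmin) (hqmin : 0 < qmin)
    (p : Fin N → Fin L → ℝ) (hp : ∀ n k, pmin ≤ p n k)
    (hpsum : ∀ n, ∑ k, p n k = 1)
    (q : Fin N → ℝ) (hq : ∀ n, qmin ≤ q n) :
    (N : ℝ) * qmin * ((N : ℝ) - 1) * (pmin + pmin ^ 2 * ((L : ℝ) * ((L : ℝ) - 1) / 2))
      ≤ ∑ n, q n * ∑ k, p n k *
          ∑ m ∈ Finset.univ.erase n, ∑ l ∈ Finset.Ici k, p m l := by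
  set C := pmin + pmin ^ 2 * ((L : ℝ) * ((L : ℝ) - 1) / 2)
  have hC : 0 ≤ C := by simp only [C, ← Fin.sum_card_Ioi]; positivity
  have huser (n : Fin N) : qmin * ((N - 1) * C) ≤
      q n * ∑ k, p n k * ∑ m ∈ univ.erase n, ∑ l ∈ Ici k, p m l := by
    have hN1 : (0 : ℝ) ≤ N - 1 := by
      rw [sub_nonneg, Nat.one_le_cast]; exact n.pos
    have h := le_sum_mul_sum_erase_sum_Ici hpmin.le hp hpsum n
    rw [Fintype.card_fin] at h
    exact mul_le_mul (hq n) h (by positivity) (hqmin.le.trans (hq n))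
  calc (N : ℝ) * qmin * (N - 1) * C = #(univ : Finset (Fin N)) • (qmin * ((N - 1) * C)) := by
        rw [card_univ, Fintype.card_fin, nsmul_eq_mul]; ring
    _ ≤ _ := card_nsmul_le_sum _ _ _ fun n _ => huser n

/-- Lower bound on the heterogeneous-channel expected number of non-reporting users:
if `p_{n,k} ≥ p_min` with `∑_k p_{n,k} = 1` for every user `n`, and `q_n ≥ q_min`, then
`∑_n q_n ∑_k p_{n,k} (∑_{m≠n} ∑_{l=k}^L p_{m,l}) ≥ N·q_min·(N−1)·(p_min + p_min²·L(L−1)/2)`. -/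
theorem stmt_10 (N L : ℕ) (hN : 1 ≤ N) (hL : 1 ≤ L)
    (pmin qmin : ℝ) (hpmin : 0 < pmin) (hqmin : 0 < qmin)
    (p : Fin N → Fin L → ℝ) (hp : ∀ n k, pmin ≤ p n k)
    (hpsum : ∀ n, ∑ k, p n k = 1)
    (q : Fin N → ℝ) (hq : ∀ n, qmin ≤ q n) :
    (N : ℝ) * qmin * ((N : ℝ) - 1) * (pmin + pmin ^ 2 * ((L : ℝ) * ((L : ℝ) - 1) / 2))
      ≤ ∑ n, q n * ∑ k, p n k *
          ∑ m ∈ Finset.univ.erase n, ∑ l ∈ Finset.Ici k, p m l :=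
  stmt_10_general N L pmin qmin hpmin hqmin p hp hpsum q hq
end
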